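/- arXiv:1703.01106 — 3 statements merged into one kernel-verified Lean document; each statement's English description precedes it below -/
import Mathlib

section
/- Fix d ≥ 1, a real n₀ > 0, a vector x₀ ∈ ℝ^d, and two distinct points x, y ∈ ℝ^d (so Δ := ‖x − y‖ > 0). For a dataset D = (D_1, …, D_n) ∈ (ℝ^d)^n define the non-private estimate θ̂_NP(D) = (n₀·x₀ + Σ_{i=1}^n D_i)/(n₀ + n). Two datasets of size n are adjacent if they differ in exactly one coordinate. Let ε > 0 and δ ∈ (0,1), and for each n let M_n be a map assigning to each dataset D ∈ (ℝ^d)^n a probability measure M_n(D) on ℝ^d such that for all adjacent D, D′ and all measurable S, M_n(D)(S) ≤ exp(ε)·M_n(D′)(S) + δ. Let f : ℕ → ℝ be nonnegative with n·f(n) → 0 as n → ∞. Then it is NOT the case that for every α > 0 there exists N such that for all n ≥ N and all datasets D ∈ (ℝ^d)^n, M_n(D)({t ∈ ℝ^d : ‖t − θ̂_NP(D)‖ > f(n)}) < α. (Private estimates of an exponential-family posterior expectation cannot converge to the non-private estimates at a rate faster than 1/n.) -/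
open MeasureTheory

/-- No (ε,δ)-DP family of mechanisms can converge to the non-private
exponential-family posterior-expectation estimate
`θ̂_NP(D) = (n₀·x₀ + Σᵢ Dᵢ)/(n₀ + n)` at a rate `f(n)` with `n·f(n) → 0`. -/
theorem no_faster_than_one_over_n (d : ℕ) (hd : 1 ≤ d)
    (n₀ : ℝ) (hn₀ : 0 < n₀) (x₀ : EuclideanSpace ℝ (Fin d))
    (x y : EuclideanSpace ℝ (Fin d)) (hxy : x ≠ y)
    (ε : ℝ) (hε : 0 < ε) (δ : ℝ) (hδ : δ ∈ Set.Ioo (0 : ℝ) 1)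
    (M : (n : ℕ) → (Fin n → EuclideanSpace ℝ (Fin d))
        → Measure (EuclideanSpace ℝ (Fin d)))
    (hprob : ∀ n D, IsProbabilityMeasure (M n D))
    (hDP : ∀ n (D D' : Fin n → EuclideanSpace ℝ (Fin d)),
      (∃! i, D i ≠ D' i) → ∀ S : Set (EuclideanSpace ℝ (Fin d)), MeasurableSet S →
        M n D S ≤ ENNReal.ofReal (Real.exp ε) * M n D' S + ENNReal.ofReal δ)
    (f : ℕ → ℝ) (hf : ∀ n, 0 ≤ f n)
    (hft : Filter.Tendsto (fun n : ℕ => (n : ℝ) * f n) Filter.atTop (nhds 0)) :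
    ¬ (∀ α > (0 : ℝ), ∃ N : ℕ, ∀ n ≥ N, ∀ D : Fin n → EuclideanSpace ℝ (Fin d),
        (M n D {t : EuclideanSpace ℝ (Fin d) |
            f n < ‖t - (n₀ + n)⁻¹ • (n₀ • x₀ + ∑ i, D i)‖}).toReal < α) := by
  intro hconv
  have hδ0 : (0:ℝ) < δ := hδ.1
  have hδ1 : δ < 1 := hδ.2
  have hexp : (0:ℝ) < Real.exp ε := Real.exp_pos ε
  set Δ : ℝ := ‖x - y‖ with hΔdef
  have hΔ : 0 < Δ := by
    rw [hΔdef, norm_pos_iff, sub_ne_zero]; exact hxy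
  set α : ℝ := (1 - δ) / (2 * (Real.exp ε + 1)) with hαdef
  have hα : 0 < α := by
    apply div_pos (by linarith) (by positivity)
  obtain ⟨N, hN⟩ := hconv α hα
  have hev : ∀ᶠ n : ℕ in Filter.atTop, (n : ℝ) * f n < Δ / (2 * (n₀ + 1)) := by
    have := hft.eventually_lt_const (show (0:ℝ) < Δ / (2 * (n₀ + 1)) by positivity)
    exact this
  obtain ⟨N₁, hN₁⟩ := Filter.eventually_atTop.mp hev
  set n : ℕ := max 1 (max N N₁) with hn
  have hn1 : 1 ≤ n := le_max_left _ _
  have hnN : N ≤ n := le_trans (le_max_left _ _) (le_max_right _ _)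
  have hnN₁ : N₁ ≤ n := le_trans (le_max_right _ _) (le_max_right _ _)
  have hnpos : (0:ℝ) < n₀ + n := by
    have : (1:ℝ) ≤ (n:ℝ) := by exact_mod_cast hn1
    linarith
  -- the two adjacent datasets
  have h0n : 0 < n := hn1
  set i0 : Fin n := ⟨0, h0n⟩ with hi0
  set D : Fin n → EuclideanSpace ℝ (Fin d) := fun _ => x with hD
  set D' : Fin n → EuclideanSpace ℝ (Fin d) := Function.update D i0 y with hD'
  have hadj : ∃! i, D i ≠ D' i := by
    refine ⟨i0, ?_, ?_⟩
    · simp only [hD, hD', Function.update_self]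
      exact hxy
    · intro j hj
      by_contra hji
      apply hj
      rw [hD', Function.update_of_ne hji]
  set cD : EuclideanSpace ℝ (Fin d) := (n₀ + n)⁻¹ • (n₀ • x₀ + ∑ i, D i) with hcD
  set cD' : EuclideanSpace ℝ (Fin d) := (n₀ + n)⁻¹ • (n₀ • x₀ + ∑ i, D' i) with hcD'
  have hsum : (∑ i, D i) - (∑ i, D' i) = x - y := by
    rw [← Finset.sum_sub_distrib]
    rw [Finset.sum_eq_single i0]
    · simp [hD, hD', Function.update_self]
    · intro j _ hji
      rw [hD', Function.update_of_ne hji, sub_self]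
    · intro h; exact absurd (Finset.mem_univ i0) h
  have hdist : dist cD cD' = (n₀ + n)⁻¹ * Δ := by
    rw [dist_eq_norm]
    have hsub : cD - cD' = (n₀ + n)⁻¹ • (x - y) := by
      rw [hcD, hcD', ← smul_sub]
      congr 1
      rw [← hsum]; abel
    rw [hsub, norm_smul, Real.norm_eq_abs, abs_of_pos (by positivity)]
  -- f n is small
  have hfn : 2 * f n < (n₀ + n)⁻¹ * Δ := by
    have h1 : (n:ℝ) * f n < Δ / (2 * (n₀ + 1)) := hN₁ n hnN₁
    have h2 : (1:ℝ) ≤ (n:ℝ) := by exact_mod_cast hn1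
    have h3 : f n ≤ (n:ℝ) * f n := le_mul_of_one_le_left (hf n) h2
    have h4 : (n:ℝ) * f n * (2 * (n₀ + 1)) < Δ := (lt_div_iff₀ (by positivity)).mp h1
    rw [inv_mul_eq_div, lt_div_iff₀ hnpos]
    nlinarith [hf n, hn₀.le]
  -- ball around cD
  set B : Set (EuclideanSpace ℝ (Fin d)) := Metric.closedBall cD (f n) with hB
  have hBmeas : MeasurableSet B := Metric.isClosed_closedBall.measurableSet
  have hsetD : {t : EuclideanSpace ℝ (Fin d) | f n < ‖t - cD‖} = Bᶜ := by
    ext t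
    simp [hB, Metric.mem_closedBall, dist_eq_norm, not_le]
  have hsetD' : {t : EuclideanSpace ℝ (Fin d) | f n < ‖t - cD'‖}
      = (Metric.closedBall cD' (f n))ᶜ := by
    ext t
    simp [Metric.mem_closedBall, dist_eq_norm, not_le]
  haveI := hprob n D
  haveI := hprob n D'
  -- accuracy on D
  have h1 : ((M n D) Bᶜ).toReal < α := by
    have := hN n hnN D
    rwa [← hcD, hsetD] at this
  -- accuracy on D'
  have h2 : ((M n D') (Metric.closedBall cD' (f n))ᶜ).toReal < α := by
    have := hN n hnN D'
    rwa [← hcD', hsetD'] at this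
  -- B is disjoint from ball around cD'
  have hBsub : B ⊆ (Metric.closedBall cD' (f n))ᶜ := by
    intro t ht
    have ht' : dist t cD ≤ f n := Metric.mem_closedBall.mp ht
    have htri : dist cD cD' ≤ dist t cD + dist t cD' := by
      rw [dist_comm t cD]
      exact dist_triangle cD t cD'
    rw [hdist] at htri
    simp only [Set.mem_compl_iff, Metric.mem_closedBall, not_le]
    linarith
  have h3 : ((M n D') B).toReal < α :=
    lt_of_le_of_lt
      (ENNReal.toReal_mono (measure_ne_top _ _) (measure_mono hBsub)) h2
  -- DP inequality
  have hdp := hDP n D D' hadj B hBmeas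
  have h4 : ((M n D) B).toReal ≤ Real.exp ε * ((M n D') B).toReal + δ := by
    have hfin : ENNReal.ofReal (Real.exp ε) * (M n D') B + ENNReal.ofReal δ ≠ ⊤ := by
      apply ENNReal.add_ne_top.mpr
      constructor
      · exact ENNReal.mul_ne_top ENNReal.ofReal_ne_top (measure_ne_top _ _)
      · exact ENNReal.ofReal_ne_top
    have := ENNReal.toReal_mono hfin hdp
    rwa [ENNReal.toReal_add (ENNReal.mul_ne_top ENNReal.ofReal_ne_top (measure_ne_top _ _))
        ENNReal.ofReal_ne_top, ENNReal.toReal_mul, ENNReal.toReal_ofReal hexp.le,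
        ENNReal.toReal_ofReal hδ0.le] at this
  -- probability of B is large
  have h5 : 1 - α < ((M n D) B).toReal := by
    have hcompl : (M n D) Bᶜ = 1 - (M n D) B := prob_compl_eq_one_sub hBmeas
    have hle1 : (M n D) B ≤ 1 := prob_le_one
    have : ((M n D) Bᶜ).toReal = 1 - ((M n D) B).toReal := by
      rw [hcompl, ENNReal.toReal_sub_of_le hle1 ENNReal.one_ne_top, ENNReal.toReal_one]
    rw [this] at h1
    linarith
  -- combine
  have hkey : 1 - α < Real.exp ε * α + δ := by
    have := mul_lt_mul_of_pos_left h3 hexp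
    linarith
  have hαeq : (Real.exp ε + 1) * α = (1 - δ) / 2 := by
    rw [hαdef]
    field_simp
  nlinarith [hkey, hαeq]
end

section
/- Fix d ≥ 1, a real n₀ ≥ 0, x₀ ∈ ℝ^d, and per-coordinate noise variances σ_j² > 0 for j = 1, …, d (independent of n). For a dataset D = (D_1, …, D_n) ∈ (ℝ^d)^n define μ_NP(D) = (n₀·x₀ + Σ_{i=1}^n D_i)/(n₀ + n), and define the perturbed estimate μ_DP(D) = μ_NP(D) + η/(n₀ + n), where η ∈ ℝ^d is random with law the product measure of Gaussians N(0, σ_j²). Then for every α > 0 there exists a constant C > 0 such that for all n ≥ 1 and all datasets D ∈ (ℝ^d)^n, the probability (over η) that ‖μ_DP(D) − μ_NP(D)‖₁ > C/n is less than α. (The Gaussian-mechanism sufficient-statistics-perturbation estimate of a Gaussian mean converges to the non-private estimate at rate O(1/n), i.e. it is asymptotically efficiently private.) -/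
open MeasureTheory ProbabilityTheory

/-- Asymptotic efficiency of the Gaussian sufficient-statistics
perturbation for a Gaussian mean: with `μ_NP(D) = (n₀·x₀ + Σᵢ Dᵢ)/(n₀+n)` and
`μ_DP(D) = μ_NP(D) + η/(n₀+n)`, `η` distributed as a product of `N(0, σⱼ²)`
(variances independent of `n`), for every `α > 0` there is `C > 0` such that
for all `n ≥ 1` and all datasets `D`,
`Pr_η(‖μ_DP(D) − μ_NP(D)‖₁ > C/n) < α`. -/
theorem gaussian_ssp_mean_rate (d : ℕ) (hd : 1 ≤ d)
    (n₀ : ℝ) (hn₀ : 0 ≤ n₀) (x₀ : Fin d → ℝ)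
    (σ2 : Fin d → ℝ) (hσ2 : ∀ j, 0 < σ2 j) :
    ∀ α > (0 : ℝ), ∃ C > (0 : ℝ), ∀ n : ℕ, 1 ≤ n → ∀ D : Fin n → (Fin d → ℝ),
      ((Measure.pi fun j : Fin d => gaussianReal 0 ((σ2 j).toNNReal))
        {η : Fin d → ℝ |
          C / n < ∑ j,
            |((((n₀ + n)⁻¹ • (n₀ • x₀ + ∑ i, D i)) + (n₀ + n)⁻¹ • η) j
              - ((n₀ + n)⁻¹ • (n₀ • x₀ + ∑ i, D i)) j)|}).toReal < α := by
  intro α hα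
  set μ := Measure.pi fun j : Fin d => gaussianReal 0 ((σ2 j).toNNReal) with hμ
  have hprob : IsProbabilityMeasure μ := by infer_instance
  set A : ℕ → Set (Fin d → ℝ) := fun k => {η | (k : ℝ) < ∑ j, |η j|} with hA
  have hmeas : ∀ k, MeasurableSet (A k) := by
    intro k
    exact measurableSet_lt measurable_const
      (Finset.measurable_sum _ (fun j _ => (measurable_pi_apply j).abs))
  have hanti : Antitone A := by
    intro a b hab η hη
    exact lt_of_le_of_lt (Nat.cast_le.mpr hab : (a:ℝ) ≤ b) hη
  have hempty : ⋂ k, A k = ∅ := by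
    ext η
    simp only [Set.mem_iInter, Set.mem_empty_iff_false, iff_false, not_forall]
    obtain ⟨k, hk⟩ := exists_nat_gt (∑ j, |η j|)
    exact ⟨k, by simpa [A] using not_lt.mpr hk.le⟩
  have htend : Filter.Tendsto (fun k => μ (A k)) Filter.atTop (nhds (μ (⋂ k, A k))) :=
    tendsto_measure_iInter_atTop (fun k => (hmeas k).nullMeasurableSet) hanti
      ⟨0, measure_ne_top μ _⟩
  rw [hempty, measure_empty] at htend
  have hex : ∃ k, μ (A k) < ENNReal.ofReal α := by
    have h2 := (ENNReal.tendsto_atTop_zero.mp htend) (ENNReal.ofReal α / 2)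
      (ENNReal.half_pos (ENNReal.ofReal_pos.mpr hα).ne')
    obtain ⟨k, hk⟩ := h2
    refine ⟨k, lt_of_le_of_lt (hk k le_rfl) ?_⟩
    exact ENNReal.half_lt_self (ENNReal.ofReal_pos.mpr hα).ne' ENNReal.ofReal_ne_top
  obtain ⟨k, hk⟩ := hex
  refine ⟨k + 1, by positivity, ?_⟩
  intro n hn D
  have hnpos : (0 : ℝ) < n := by exact_mod_cast hn
  have hden : (0 : ℝ) < n₀ + n := by linarith
  have hsub : {η : Fin d → ℝ |
      ((k : ℝ) + 1) / n < ∑ j,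
        |((((n₀ + n)⁻¹ • (n₀ • x₀ + ∑ i, D i)) + (n₀ + n)⁻¹ • η) j
          - ((n₀ + n)⁻¹ • (n₀ • x₀ + ∑ i, D i)) j)|} ⊆ A k := by
    intro η hη
    simp only [Set.mem_setOf_eq, Pi.add_apply, Pi.smul_apply, smul_eq_mul,
      add_sub_cancel_left] at hη
    have hsum : ∑ j, |(n₀ + n)⁻¹ * η j| = (n₀ + n)⁻¹ * ∑ j, |η j| := by
      rw [Finset.mul_sum]
      exact Finset.sum_congr rfl fun j _ => by
        rw [abs_mul, abs_of_pos (inv_pos.mpr hden)]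
    rw [hsum] at hη
    have h1 : ((k : ℝ) + 1) / n < (n₀ + n)⁻¹ * ∑ j, |η j| := hη
    have h2 : ((k : ℝ) + 1) * (n₀ + n) / n < ∑ j, |η j| := by
      rw [div_lt_iff₀ hnpos] at h1 ⊢
      have hinv : (n₀ + n)⁻¹ * (n₀ + n) = 1 := inv_mul_cancel₀ hden.ne'
      have h1' := mul_lt_mul_of_pos_right h1 hden
      calc ((k : ℝ) + 1) * (n₀ + n) < (((n₀ + n)⁻¹ * ∑ j, |η j|) * n) * (n₀ + n) := h1'
        _ = ((n₀ + n)⁻¹ * (n₀ + n)) * ((∑ j, |η j|) * n) := by ring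
        _ = (∑ j, |η j|) * n := by rw [hinv, one_mul]
    have h3 : (k : ℝ) < ((k : ℝ) + 1) * (n₀ + n) / n := by
      rw [lt_div_iff₀ hnpos]
      nlinarith [hnpos, hn₀, (Nat.cast_nonneg k : (0:ℝ) ≤ (k:ℝ))]
    exact h3.trans h2
  calc (μ _).toReal ≤ (μ (A k)).toReal :=
        ENNReal.toReal_mono (measure_ne_top μ _) (measure_mono hsub)
    _ < α := by
        have hle := ENNReal.toReal_mono ENNReal.ofReal_ne_top hk.le
        rw [ENNReal.toReal_ofReal hα.le] at hle
        rcases lt_or_eq_of_le hle with h | h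
        · exact h
        · exact absurd (by rw [← ENNReal.ofReal_toReal (measure_ne_top μ _), h]) hk.ne
end

section
/- Let d ≥ 1 and let c_x ≥ 0 and c_{d+1} ≥ 0 be reals. Let x, y ∈ ℝ^{d+1} satisfy |x_j| ≤ c_x and |y_j| ≤ c_x for j = 1, …, d, and |x_{d+1}| ≤ c_{d+1}, |y_{d+1}| ≤ c_{d+1}. Then Σ_{j=1}^d Σ_{k=j}^d (x_j·x_k − y_j·y_k)² + Σ_{j=1}^d (x_j·x_{d+1} − y_j·y_{d+1})² ≤ d·(2d − 1)·c_x⁴ + 4·d·(c_x·c_{d+1})². -/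
open Finset

lemma prod_sq_bound {a b a' b' c e : ℝ} (hc : 0 ≤ c) (he : 0 ≤ e)
    (ha : |a| ≤ c) (ha' : |a'| ≤ c) (hb : |b| ≤ e) (hb' : |b'| ≤ e) :
    (a * b - a' * b') ^ 2 ≤ 4 * (c * e) ^ 2 := by
  have h1 : |a * b| ≤ c * e := by
    rw [abs_mul]; exact mul_le_mul ha hb (abs_nonneg _) hc
  have h2 : |a' * b'| ≤ c * e := by
    rw [abs_mul]; exact mul_le_mul ha' hb' (abs_nonneg _) hc
  have e1 := abs_le.mp h1
  have e2 := abs_le.mp h2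
  nlinarith [e1.1, e1.2, e2.1, e2.2]

lemma diag_sq_bound {a a' c : ℝ} (hc : 0 ≤ c) (ha : |a| ≤ c) (ha' : |a'| ≤ c) :
    (a * a - a' * a') ^ 2 ≤ c ^ 4 := by
  have h1 : a ^ 2 ≤ c ^ 2 := sq_le_sq' (abs_le.mp ha).1 (abs_le.mp ha).2
  have h2 : a' ^ 2 ≤ c ^ 2 := sq_le_sq' (abs_le.mp ha').1 (abs_le.mp ha').2
  nlinarith [sq_nonneg a, sq_nonneg a']

/-- Squared ℓ2-sensitivity bound for the linear-regression
sufficient-statistics query with common feature bound `c_x` and target bound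
`c_{d+1}`: the bound simplifies to `d(2d−1)c_x⁴ + 4d(c_x·c_{d+1})²`. -/
theorem blr_sensitivity_bound_common (d : ℕ) (hd : 1 ≤ d)
    (cx cd1 : ℝ) (hcx : 0 ≤ cx) (hcd1 : 0 ≤ cd1)
    (x y : Fin (d + 1) → ℝ)
    (hx : ∀ j : Fin d, |x j.castSucc| ≤ cx) (hy : ∀ j : Fin d, |y j.castSucc| ≤ cx)
    (hxt : |x (Fin.last d)| ≤ cd1) (hyt : |y (Fin.last d)| ≤ cd1) :
    (∑ j : Fin d, ∑ k ∈ Finset.univ.filter (fun k : Fin d => j ≤ k),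
        (x j.castSucc * x k.castSucc - y j.castSucc * y k.castSucc) ^ 2)
      + ∑ j : Fin d,
          (x j.castSucc * x (Fin.last d) - y j.castSucc * y (Fin.last d)) ^ 2
    ≤ d * (2 * d - 1) * cx ^ 4 + 4 * d * (cx * cd1) ^ 2 := by
  -- second sum bound
  have hS2 : ∑ j : Fin d,
      (x j.castSucc * x (Fin.last d) - y j.castSucc * y (Fin.last d)) ^ 2
      ≤ d * (4 * (cx * cd1) ^ 2) := by
    calc _ ≤ ∑ _j : Fin d, 4 * (cx * cd1) ^ 2 :=
          Finset.sum_le_sum fun j _ =>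
            prod_sq_bound hcx hcd1 (hx j) (hy j) hxt hyt
      _ = d * (4 * (cx * cd1) ^ 2) := by simp [mul_comm]
  -- per-row bound for first sum
  have hrow : ∀ j : Fin d,
      ∑ k ∈ Finset.univ.filter (fun k : Fin d => j ≤ k),
        (x j.castSucc * x k.castSucc - y j.castSucc * y k.castSucc) ^ 2
      ≤ cx ^ 4 + ((d - 1 - (j : ℕ) : ℕ) : ℝ) * (4 * cx ^ 4) := by
    intro j
    have hset : Finset.univ.filter (fun k : Fin d => j ≤ k)
        = insert j (Finset.Ioi j) := by
      ext k
      simp [Finset.mem_Ioi, le_iff_eq_or_lt, eq_comm]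
    rw [hset, Finset.sum_insert (by simp)]
    have h1 : (x j.castSucc * x j.castSucc - y j.castSucc * y j.castSucc) ^ 2
        ≤ cx ^ 4 := diag_sq_bound hcx (hx j) (hy j)
    have h2 : ∑ k ∈ Finset.Ioi j,
        (x j.castSucc * x k.castSucc - y j.castSucc * y k.castSucc) ^ 2
        ≤ ((d - 1 - (j : ℕ) : ℕ) : ℝ) * (4 * cx ^ 4) := by
      have := Finset.sum_le_card_nsmul (Finset.Ioi j)
        (fun k => (x j.castSucc * x k.castSucc - y j.castSucc * y k.castSucc) ^ 2)
        (4 * cx ^ 4)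
        (fun k _ => by
          have : 4 * (cx * cx) ^ 2 = 4 * cx ^ 4 := by ring
          exact this ▸ prod_sq_bound hcx hcx (hx j) (hy j) (hx k) (hy k))
      rwa [Fin.card_Ioi, nsmul_eq_mul] at this
    linarith
  have hS1 : ∑ j : Fin d, ∑ k ∈ Finset.univ.filter (fun k : Fin d => j ≤ k),
        (x j.castSucc * x k.castSucc - y j.castSucc * y k.castSucc) ^ 2
      ≤ d * cx ^ 4 + ((∑ j ∈ Finset.range d, (d - 1 - j) : ℕ) : ℝ) * (4 * cx ^ 4) := by
    calc _ ≤ ∑ j : Fin d, (cx ^ 4 + ((d - 1 - (j : ℕ) : ℕ) : ℝ) * (4 * cx ^ 4)) :=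
          Finset.sum_le_sum fun j _ => hrow j
      _ = d * cx ^ 4 + ((∑ j ∈ Finset.range d, (d - 1 - j) : ℕ) : ℝ) * (4 * cx ^ 4) := by
          rw [Finset.sum_add_distrib, Finset.sum_const, Fin.sum_univ_eq_sum_range
            (fun j => ((d - 1 - j : ℕ) : ℝ) * (4 * cx ^ 4))]
          rw [← Finset.sum_mul, ← Nat.cast_sum]
          simp [mul_comm]
  -- counting identity
  have hcount : 2 * (∑ j ∈ Finset.range d, (d - 1 - j)) = d * (d - 1) := by
    have h := Finset.sum_range_reflect (fun j => j) d
    have hg := Finset.sum_range_id_mul_two d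
    omega
  have hcast : ((∑ j ∈ Finset.range d, (d - 1 - j) : ℕ) : ℝ) * 2
      = (d : ℝ) * ((d : ℝ) - 1) := by
    have h' : (((2 * (∑ j ∈ Finset.range d, (d - 1 - j)) : ℕ)) : ℝ)
        = ((d * (d - 1) : ℕ) : ℝ) := congrArg _ hcount
    simp only [Nat.cast_mul, Nat.cast_ofNat, Nat.cast_sub hd, Nat.cast_one] at h'
    linarith
  have key : (d : ℝ) * (2 * d - 1) * cx ^ 4 + 4 * d * (cx * cd1) ^ 2
      = (d * cx ^ 4 + ((∑ j ∈ Finset.range d, (d - 1 - j) : ℕ) : ℝ) * (4 * cx ^ 4))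
        + d * (4 * (cx * cd1) ^ 2) := by
    linear_combination (-(2 : ℝ) * cx ^ 4) * hcast
  linarith
end
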